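/- Let S be a simplicial poset of rank n with m vertices, and let t₁,…,t_n be degree-two elements in Z[S] forming a linear system of parameters (i.e. Z[S] is finitely generated over Z[t₁,…,t_n]). Then for every σ ∈ S, the images s_σ(t₁),…,s_σ(t_n) generate the ideal of positive-degree elements of the polynomial ring Z[σ] = Z[v_i : i ∈ V(σ)]. -/

import Mathlib

open MvPolynomial

/-- A finite poset with a bottom element is a *simplicial poset* if every lower
interval `[⊥, σ]` is a Boolean lattice, i.e. order-isomorphic to the poset of
subsets of a finite set. -/
def IsSimplicialPoset (α : Type) [Fintype α] [PartialOrder α] [OrderBot α] : Prop :=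
  ∀ σ : α, ∃ k : ℕ, Nonempty (Set.Icc (⊥ : α) σ ≃o Finset (Fin k))

/-- The vertex set `V(σ)`: rank-one elements (atoms) below `σ`. -/
def vertexSet {α : Type} [PartialOrder α] [OrderBot α] (σ : α) : Set α :=
  {i : α | IsAtom i ∧ i ≤ σ}

/-- The rank `|σ|`, defined as the number of vertices of `σ`. -/
noncomputable def srank {α : Type} [PartialOrder α] [OrderBot α] (σ : α) : ℕ :=
  (vertexSet σ).ncard

/-- `σ ∨ τ`: the set of least (minimal) common upper bounds. -/
def joins {α : Type} [PartialOrder α] (σ τ : α) : Set α :=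
  {η : α | Minimal (fun x => σ ≤ x ∧ τ ≤ x) η}

/-- `σ ∧ τ`: the set of greatest (maximal) common lower bounds. -/
def meets {α : Type} [PartialOrder α] (σ τ : α) : Set α :=
  {ρ : α | Maximal (fun x => x ≤ σ ∧ x ≤ τ) ρ}

/-- The straightening ideal defining the face ring of a simplicial poset:
generated by `v_⊥ - 1`, the products `v_σ v_τ` with `σ ∨ τ = ∅`, and the
elements `v_σ v_τ - v_{σ∧τ} ∑_{η ∈ σ∨τ} v_η`. -/
noncomputable def straightening (R : Type) [CommRing R]
    (α : Type) [Fintype α] [PartialOrder α] [OrderBot α] : Ideal (MvPolynomial α R) :=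
  Ideal.span (({X ⊥ - 1} : Set (MvPolynomial α R)) ∪
    {p | ∃ σ τ : α, joins σ τ = ∅ ∧ p = X σ * X τ} ∪
    {p | ∃ σ τ ρ : α, ρ ∈ meets σ τ ∧ (joins σ τ).Nonempty ∧
      p = X σ * X τ - X ρ * ∑ η ∈ (Set.toFinite (joins σ τ)).toFinset, X η})

/-- The face ring `R[S]` of a simplicial poset. -/
noncomputable abbrev faceRing (R : Type) [CommRing R]
    (α : Type) [Fintype α] [PartialOrder α] [OrderBot α] :=
  MvPolynomial α R ⧸ straightening R α

/-! The restriction `s_σ` sends `v_τ` to the monomial `∏_{i ∈ V(τ)} v_i` when `τ ≤ σ` and to `0`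
otherwise; it respects the straightening relations because `[⊥, σ]` is Boolean, so that joins
and meets below `σ` correspond to unions and intersections of vertex sets.

The linear forms `s_σ(t_i)` generate `(v_i : i ∈ V(σ))` as soon as their coefficient vectors span
`ℤ^{V(σ)}`. If they did not, some surjective linear map `f : ℤ^{V(σ)} → K = ℤ ⧸ I` would kill them
all. Then `v_j ↦ f(e_j) x` maps `ℤ[σ]` onto `K[x]`, and composed with `s_σ` it kills every `t_i`,
so finiteness of `ℤ[S]` over `ℤ[t₁, …, t_n]` would make `K[x]` a finite `ℤ`-module, which it is
not. -/

section BooleanInterval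

variable {α : Type} [PartialOrder α] {σ : α} {L : Type*} [Lattice L] (f : Set.Iic σ ≃o L)

theorem OrderIso.symm_sup_mem_joins (τ τ' : Set.Iic σ) :
    (f.symm (f τ ⊔ f τ') : α) ∈ joins (τ : α) τ' := by
  refine ⟨⟨f.le_symm_apply.2 le_sup_left, f.le_symm_apply.2 le_sup_right⟩, fun x hx hxη => ?_⟩
  exact (f.symm_apply_le (x := ⟨x, hxη.trans (f.symm _).2⟩)).2
    (sup_le (f.le_iff_le.2 hx.1) (f.le_iff_le.2 hx.2))

theorem OrderIso.eq_symm_sup_of_mem_joins {τ τ' : Set.Iic σ} {η : α}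
    (hη : η ∈ joins (τ : α) τ') (hησ : η ≤ σ) : η = f.symm (f τ ⊔ f τ') := by
  have hle : (f.symm (f τ ⊔ f τ') : α) ≤ η :=
    (f.symm_apply_le (x := ⟨η, hησ⟩)).2 (sup_le (f.le_iff_le.2 hη.1.1) (f.le_iff_le.2 hη.1.2))
  exact le_antisymm (hη.2 (f.symm_sup_mem_joins τ τ').1 hle) hle

theorem OrderIso.map_eq_inf_of_mem_meets {τ τ' : Set.Iic σ} {ρ : α}
    (hρ : ρ ∈ meets (τ : α) τ') : f ⟨ρ, hρ.1.1.trans τ.2⟩ = f τ ⊓ f τ' := by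
  set μ := f.symm (f τ ⊓ f τ')
  have hμ : (μ : α) ≤ τ ∧ (μ : α) ≤ τ' :=
    ⟨f.symm_apply_le.2 inf_le_left, f.symm_apply_le.2 inf_le_right⟩
  have hρμ : ρ ≤ μ := (f.le_symm_apply (x := ⟨ρ, hρ.1.1.trans τ.2⟩)).2
    (le_inf (f.le_iff_le.2 hρ.1.1) (f.le_iff_le.2 hρ.1.2))
  exact (congrArg f (Subtype.ext (le_antisymm hρμ (hρ.2 hμ hρμ)))).trans (f.apply_symm_apply _)

theorem OrderIso.exists_le_iff_mem_of_isAtom [OrderBot α] {ι : Type*} (e : Set.Iic σ ≃o Finset ι)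
    {j : α} (hj : IsAtom j) (hjσ : j ≤ σ) : ∃ a, ∀ x : Set.Iic σ, j ≤ x ↔ a ∈ e x := by
  obtain ⟨a, ha⟩ := Finset.isAtom_iff.1 ((e.isAtom_iff _).2 (hj.Iic hjσ))
  exact ⟨a, fun x => by
    rw [← Finset.singleton_subset_iff, ← ha]; exact (e.le_iff_le (x := ⟨j, hjσ⟩) (y := x)).symm⟩

theorem IsSimplicialPoset.exists_orderIso_Iic [Fintype α] [OrderBot α] (hS : IsSimplicialPoset α)
    (σ : α) : ∃ k, Nonempty (Set.Iic σ ≃o Finset (Fin k)) := by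
  obtain ⟨k, ⟨e⟩⟩ := hS σ
  exact ⟨k, ⟨(OrderIso.setCongr _ _ (by ext; simp)).trans e⟩⟩

end BooleanInterval

section Restriction

variable {α : Type} [Fintype α] [PartialOrder α] [OrderBot α]
  [DecidablePred (IsAtom (α := α))] [DecidableRel ((· ≤ ·) : α → α → Prop)]

local notation "V(" σ ")" => {j // IsAtom j ∧ j ≤ σ}

def atomsBelow (σ τ : α) : Finset V(σ) :=
  Finset.univ.filter fun j => j.1 ≤ τ

theorem exists_mem_joins_atomsBelow_eq_union [DecidableEq α] (hS : IsSimplicialPoset α)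
    {σ τ τ' : α} (hτ : τ ≤ σ) (hτ' : τ' ≤ σ) :
    ∃ η ∈ joins τ τ', η ≤ σ ∧ atomsBelow σ η = atomsBelow σ τ ∪ atomsBelow σ τ' ∧
      ∀ η' ∈ joins τ τ', η' ≤ σ → η' = η := by
  obtain ⟨k, ⟨e⟩⟩ := hS.exists_orderIso_Iic σ
  set η := e.symm (e ⟨τ, hτ⟩ ⊔ e ⟨τ', hτ'⟩) with hη
  refine ⟨η, e.symm_sup_mem_joins ⟨τ, hτ⟩ ⟨τ', hτ'⟩, η.2, ?_,
    fun η' h h' => e.eq_symm_sup_of_mem_joins h h'⟩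
  ext j
  obtain ⟨a, ha⟩ := e.exists_le_iff_mem_of_isAtom j.2.1 j.2.2
  simp only [atomsBelow, Finset.mem_union, Finset.mem_filter, Finset.mem_univ, true_and]
  rw [ha η, hη, e.apply_symm_apply, Finset.sup_eq_union, Finset.mem_union, ← ha, ← ha]

theorem atomsBelow_eq_inter_of_mem_meets [DecidableEq α] (hS : IsSimplicialPoset α)
    {σ τ τ' ρ : α} (hτ : τ ≤ σ) (hτ' : τ' ≤ σ) (hρ : ρ ∈ meets τ τ') :
    atomsBelow σ ρ = atomsBelow σ τ ∩ atomsBelow σ τ' := by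
  obtain ⟨k, ⟨e⟩⟩ := hS.exists_orderIso_Iic σ
  have hρe := e.map_eq_inf_of_mem_meets (τ := ⟨τ, hτ⟩) (τ' := ⟨τ', hτ'⟩) hρ
  ext j
  obtain ⟨a, ha⟩ := e.exists_le_iff_mem_of_isAtom j.2.1 j.2.2
  simp [atomsBelow, ha ⟨τ, hτ⟩, ha ⟨τ', hτ'⟩, ha ⟨ρ, hρ.1.1.trans hτ⟩, hρe]

variable (R : Type) [CommRing R]

noncomputable def faceMonomial (σ τ : α) : MvPolynomial V(σ) R :=
  if τ ≤ σ then ∏ j ∈ atomsBelow σ τ, X j else 0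

variable {R}

theorem faceMonomial_of_not_le {σ τ : α} (h : ¬τ ≤ σ) : faceMonomial R σ τ = 0 := if_neg h

theorem faceMonomial_bot (σ : α) : faceMonomial R σ ⊥ = 1 := by
  rw [faceMonomial, if_pos bot_le, Finset.prod_eq_one]
  intro j hj
  exact absurd (le_bot_iff.1 (Finset.mem_filter.1 hj).2) j.2.1.1

theorem faceMonomial_vertex {σ : α} (j : V(σ)) : faceMonomial R σ j = X j := by
  have hj : atomsBelow σ j = {j} := by
    ext i
    simp only [atomsBelow, Finset.mem_filter, Finset.mem_univ, true_and, Finset.mem_singleton]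
    exact ⟨fun h => Subtype.ext ((j.2.1.le_iff.1 h).resolve_left i.2.1.1), fun h => h ▸ le_rfl⟩
  rw [faceMonomial, if_pos j.2.2, hj, Finset.prod_singleton]

theorem sum_faceMonomial_joins_eq_zero_of_not_le {σ τ τ' : α} (h : ¬(τ ≤ σ ∧ τ' ≤ σ)) :
    ∑ η ∈ (Set.toFinite (joins τ τ')).toFinset, faceMonomial R σ η = 0 :=
  Finset.sum_eq_zero fun _ hη => faceMonomial_of_not_le fun hη' =>
    h ⟨((Set.Finite.mem_toFinset _).1 hη).1.1.trans hη',
      ((Set.Finite.mem_toFinset _).1 hη).1.2.trans hη'⟩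

theorem faceMonomial_mul_eq_zero_of_joins_eq_empty (hS : IsSimplicialPoset α) {σ τ τ' : α}
    (h : joins τ τ' = ∅) : faceMonomial R σ τ * faceMonomial R σ τ' = 0 := by
  classical
  by_cases hτ : τ ≤ σ
  · by_cases hτ' : τ' ≤ σ
    · obtain ⟨_, hη, -⟩ := exists_mem_joins_atomsBelow_eq_union hS hτ hτ'
      exact absurd (h ▸ hη) (Set.notMem_empty _)
    · rw [faceMonomial_of_not_le hτ', mul_zero]
  · rw [faceMonomial_of_not_le hτ, zero_mul]

theorem faceMonomial_mul_eq_of_mem_meets (hS : IsSimplicialPoset α) {σ τ τ' ρ : α}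
    (hρ : ρ ∈ meets τ τ') :
    faceMonomial R σ τ * faceMonomial R σ τ' =
      faceMonomial R σ ρ * ∑ η ∈ (Set.toFinite (joins τ τ')).toFinset, faceMonomial R σ η := by
  classical
  by_cases hσ : τ ≤ σ ∧ τ' ≤ σ
  · obtain ⟨hτ, hτ'⟩ := hσ
    obtain ⟨η, hη, hησ, hηV, hηuniq⟩ := exists_mem_joins_atomsBelow_eq_union hS hτ hτ'
    rw [Finset.sum_eq_single_of_mem η ((Set.Finite.mem_toFinset _).2 hη) fun η' hη' hne =>
      faceMonomial_of_not_le fun h => hne (hηuniq η' ((Set.Finite.mem_toFinset _).1 hη') h)]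
    rw [faceMonomial, faceMonomial, faceMonomial, faceMonomial, if_pos hτ, if_pos hτ',
      if_pos (hρ.1.1.trans hτ), if_pos hησ, hηV, atomsBelow_eq_inter_of_mem_meets hS hτ hτ' hρ,
      mul_comm (∏ j ∈ _ ∩ _, _), Finset.prod_union_inter]
  · rw [sum_faceMonomial_joins_eq_zero_of_not_le hσ, mul_zero]
    by_cases hτ : τ ≤ σ
    · rw [faceMonomial_of_not_le fun h => hσ ⟨hτ, h⟩, mul_zero]
    · rw [faceMonomial_of_not_le hτ, zero_mul]

theorem straightening_le_ker_aeval_faceMonomial (hS : IsSimplicialPoset α) (σ : α) :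
    straightening R α ≤ RingHom.ker (aeval (faceMonomial R σ)) := by
  rw [straightening, Ideal.span_le]
  rintro p ((rfl | ⟨τ, τ', h, rfl⟩) | ⟨τ, τ', ρ, hρ, -, rfl⟩)
  · simp [faceMonomial_bot]
  · simp [faceMonomial_mul_eq_zero_of_joins_eq_empty hS h]
  · simp [faceMonomial_mul_eq_of_mem_meets hS hρ]

variable (R) in
noncomputable def restriction (hS : IsSimplicialPoset α) (σ : α) :
    faceRing R α →ₐ[R] MvPolynomial V(σ) R :=
  Ideal.Quotient.liftₐ _ (aeval (faceMonomial R σ))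
    fun _ ha => straightening_le_ker_aeval_faceMonomial hS σ ha

theorem restriction_mk (hS : IsSimplicialPoset α) (σ : α) (p : MvPolynomial α R) :
    restriction R hS σ (Ideal.Quotient.mk _ p) = aeval (faceMonomial R σ) p :=
  Ideal.Quotient.liftₐ_apply _ _ _ _

theorem restriction_surjective (hS : IsSimplicialPoset α) (σ : α) :
    Function.Surjective (restriction R hS σ) := fun q =>
  ⟨Ideal.Quotient.mk _ (rename Subtype.val q), by
    rw [restriction_mk, aeval_rename]
    simp [Function.comp_def, faceMonomial_vertex]⟩

theorem restriction_mk_sum_atoms (hS : IsSimplicialPoset α) (σ : α) (c : α → R) :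
    restriction R hS σ (Ideal.Quotient.mk _ (∑ j ∈ Finset.univ.filter IsAtom, C (c j) * X j)) =
      ∑ j : V(σ), C (c j) * X j := by
  rw [restriction_mk]
  simp only [map_sum, map_mul, aeval_C, aeval_X, algebraMap_eq]
  rw [← Finset.sum_filter_of_ne (p := (· ≤ σ)) fun j _ hj => by_contra fun h =>
      hj (by rw [faceMonomial_of_not_le h, mul_zero]),
    Finset.filter_filter, Finset.sum_subtype (p := fun j => IsAtom j ∧ j ≤ σ) _ fun j => by simp]
  exact Finset.sum_congr rfl fun j _ => by rw [faceMonomial_vertex]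

end Restriction

theorem Submodule.exists_surjective_quotient_le_ker {R M : Type*} [CommRing R] [AddCommGroup M]
    [Module R M] [Module.Finite R M] {N : Submodule R M} (hN : N ≠ ⊤) :
    ∃ (I : Ideal R) (f : M →ₗ[R] R ⧸ I), I.IsMaximal ∧ Function.Surjective f ∧
      N ≤ LinearMap.ker f := by
  obtain ⟨N', hN', hNN'⟩ := (eq_top_or_exists_le_coatom N).resolve_left hN
  have := isSimpleModule_iff_isCoatom.2 hN'
  obtain ⟨I, hI, ⟨e⟩⟩ := isSimpleModule_iff_quot_maximal.1 this
  refine ⟨I, e.toLinearMap ∘ₗ N'.mkQ, hI, e.surjective.comp N'.mkQ_surjective, fun x hx => ?_⟩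
  simpa using hNN' hx

theorem MvPolynomial.span_sum_C_mul_X_eq_span_X {ι β R : Type*} [CommRing R] [Fintype β]
    (w : ι → β → R) (hw : Submodule.span R (Set.range w) = ⊤) :
    Ideal.span (Set.range fun i => ∑ j, C (w i j) * X j : Set (MvPolynomial β R)) =
      Ideal.span (Set.range X) := by
  classical
  set ℓ := Fintype.linearCombination R (X : β → MvPolynomial β R)
  have hlin : (fun i => ∑ j, C (w i j) * X j : ι → MvPolynomial β R) = ℓ ∘ w := by
    ext1 i; simp [ℓ, Fintype.linearCombination_apply, smul_eq_C_mul]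
  refine le_antisymm (Ideal.span_le.2 (Set.range_subset_iff.2 fun i => Ideal.sum_mem _
    fun j _ => Ideal.mul_mem_left _ _ (Ideal.subset_span ⟨j, rfl⟩)))
    (Ideal.span_le.2 (Set.range_subset_iff.2 fun j => ?_))
  have hj : X j ∈ Submodule.span R (Set.range (ℓ ∘ w)) := by
    rw [Set.range_comp, ← Submodule.map_span, hw]
    exact ⟨Pi.single j 1, trivial, by simp [ℓ]⟩
  rw [hlin]
  exact Submodule.span_le_restrictScalars R _ _ hj

section LineRestriction

variable {R K β : Type*} [CommRing R] [CommRing K] [Algebra R K] [Fintype β] [DecidableEq β]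
  (f : (β → R) →ₗ[R] K)

/-- The pull-back of polynomial functions on `K^β` along the line `x ↦ x • (f e_j)_j`. -/
noncomputable def MvPolynomial.lineRestriction : MvPolynomial β R →ₐ[R] Polynomial K :=
  aeval fun j => Polynomial.C (f (Pi.single j 1)) * Polynomial.X

theorem MvPolynomial.lineRestriction_sum_C_mul_X (w : β → R) :
    lineRestriction f (∑ j, C (w j) * X j) = Polynomial.C (f w) * Polynomial.X := by
  have hw : f w = ∑ j, w j • f (Pi.single j 1) := by
    conv_lhs => rw [← Finset.univ_sum_single w]
    simp only [map_sum, ← map_smul, ← Pi.single_smul', smul_eq_mul, mul_one]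
  rw [hw, lineRestriction, map_sum, map_sum, Finset.sum_mul]
  refine Finset.sum_congr rfl fun j _ => ?_
  rw [map_mul, aeval_C, aeval_X, Polynomial.algebraMap_apply, Algebra.smul_def, map_mul, mul_assoc]

theorem MvPolynomial.lineRestriction_surjective (hf : Function.Surjective f)
    (hK : Function.Surjective (algebraMap R K)) : Function.Surjective (lineRestriction f) := by
  have hX : Polynomial.X ∈ (lineRestriction f).range := by
    obtain ⟨v, hv⟩ := hf 1
    exact ⟨_, (lineRestriction_sum_C_mul_X f v).trans (by rw [hv, map_one, one_mul])⟩
  have hC : ∀ a, Polynomial.C a ∈ (lineRestriction f).range := fun a => by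
    obtain ⟨r, rfl⟩ := hK a
    exact ⟨C r, by simp [lineRestriction, Polynomial.algebraMap_apply]⟩
  intro q
  have hq : q ∈ (lineRestriction f).range := by
    rw [q.as_sum_range_C_mul_X_pow]
    exact Subalgebra.sum_mem _ fun i _ => mul_mem (hC _) (pow_mem hX _)
  exact (AlgHom.mem_range _).1 hq

end LineRestriction

theorem Module.Finite.of_surjective_of_le_comap_bot {R A B : Type*} [CommSemiring R] [Semiring A]
    [Semiring B] [Algebra R A] [Algebra R B] {T : Subalgebra R A} [Module.Finite T A]
    (f : A →ₐ[R] B) (hf : Function.Surjective f) (hT : T ≤ (⊥ : Subalgebra R B).comap f) :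
    Module.Finite R B := by
  classical
  obtain ⟨s, hs⟩ := Module.Finite.fg_top (R := T) (M := A)
  refine ⟨⟨s.image f, Submodule.eq_top_iff'.2 fun b => ?_⟩⟩
  obtain ⟨a, rfl⟩ := hf b
  have ha : a ∈ Submodule.span T (s : Set A) := hs ▸ Submodule.mem_top
  induction ha using Submodule.span_induction with
  | mem x hx => exact Submodule.subset_span (Finset.mem_coe.2 (Finset.mem_image_of_mem f hx))
  | zero => simp
  | add x y _ _ hx hy => rw [map_add]; exact add_mem hx hy
  | smul t x _ hx =>
    obtain ⟨r, hr⟩ := Algebra.mem_bot.1 (hT t.2)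
    rw [Subalgebra.smul_def, smul_eq_mul, map_mul, show f t = algebraMap R B r from hr.symm,
      ← Algebra.smul_def]
    exact Submodule.smul_mem _ r hx

theorem restrictions_generate_of_lsop_general {α : Type}
    [Fintype α] [PartialOrder α] [OrderBot α]
    [DecidablePred (IsAtom (α := α))] [DecidableRel ((· ≤ ·) : α → α → Prop)]
    (hS : IsSimplicialPoset α) (n : ℕ)
    (lam : Fin n → α → ℤ)
    (t : Fin n → faceRing ℤ α)
    (ht : ∀ i : Fin n, t i = Ideal.Quotient.mk (straightening ℤ α)
      (∑ j ∈ Finset.univ.filter (fun j : α => IsAtom j), C (lam i j) * X j))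
    (hlsop : Module.Finite (Algebra.adjoin ℤ (Set.range t)) (faceRing ℤ α)) :
    ∀ σ : α,
      Ideal.span (Set.range fun i : Fin n =>
          (∑ j : {j : α // IsAtom j ∧ j ≤ σ}, C (lam i j.1) * X j :
            MvPolynomial {j : α // IsAtom j ∧ j ≤ σ} ℤ)) =
        Ideal.span (Set.range (X : {j : α // IsAtom j ∧ j ≤ σ} →
          MvPolynomial {j : α // IsAtom j ∧ j ≤ σ} ℤ)) := by
  intro σ
  refine span_sum_C_mul_X_eq_span_X (fun i (j : {j : α // IsAtom j ∧ j ≤ σ}) => lam i j.1) ?_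
  classical
  by_contra hspan
  obtain ⟨I, f, hI, hf, hker⟩ := Submodule.exists_surjective_quotient_le_ker hspan
  have := Ideal.Quotient.nontrivial_iff.2 hI.ne_top
  set Θ := (lineRestriction f).comp (restriction ℤ hS σ)
  have hΘ : Function.Surjective Θ :=
    (lineRestriction_surjective f hf Ideal.Quotient.mk_surjective).comp
      (restriction_surjective hS σ)
  have hΘt : Algebra.adjoin ℤ (Set.range t) ≤ (⊥ : Subalgebra ℤ _).comap Θ :=
    Algebra.adjoin_le <| Set.range_subset_iff.2 fun i => by
      have hfi : f (fun j => lam i j.1) = 0 := hker (Submodule.subset_span ⟨i, rfl⟩)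
      rw [SetLike.mem_coe, Subalgebra.mem_comap, AlgHom.comp_apply, ht i,
        restriction_mk_sum_atoms, lineRestriction_sum_C_mul_X, hfi, map_zero, zero_mul]
      exact zero_mem _
  have := Module.Finite.of_surjective_of_le_comap_bot Θ hΘ hΘt
  exact Polynomial.not_finite (Module.Finite.of_restrictScalars_finite ℤ (ℤ ⧸ I) _)

/-- if the degree-two elements `t_i = ∑_j λ_{ij} v_j` form an lsop
in `ℤ[S]` (i.e. `ℤ[S]` is a finitely generated module over `ℤ[t₁,…,t_n]`), then
for every `σ ∈ S` the restrictions `s_σ(t_i)` generate the positive-degree ideal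
of the polynomial ring `ℤ[σ] = ℤ[v_i : i ∈ V(σ)]`. -/
theorem restrictions_generate_of_lsop {α : Type}
    [Fintype α] [PartialOrder α] [OrderBot α] [DecidableEq α]
    [DecidablePred (IsAtom (α := α))] [DecidableRel ((· ≤ ·) : α → α → Prop)]
    (hS : IsSimplicialPoset α) (n : ℕ)
    (hn : Finset.univ.sup (srank : α → ℕ) = n)
    (lam : Fin n → α → ℤ)
    (t : Fin n → faceRing ℤ α)
    (ht : ∀ i : Fin n, t i = Ideal.Quotient.mk (straightening ℤ α)
      (∑ j ∈ Finset.univ.filter (fun j : α => IsAtom j), C (lam i j) * X j))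
    (hlsop : Module.Finite (Algebra.adjoin ℤ (Set.range t)) (faceRing ℤ α)) :
    ∀ σ : α,
      Ideal.span (Set.range fun i : Fin n =>
          (∑ j : {j : α // IsAtom j ∧ j ≤ σ}, C (lam i j.1) * X j :
            MvPolynomial {j : α // IsAtom j ∧ j ≤ σ} ℤ)) =
        Ideal.span (Set.range (X : {j : α // IsAtom j ∧ j ≤ σ} →
          MvPolynomial {j : α // IsAtom j ∧ j ≤ σ} ℤ)) :=
  restrictions_generate_of_lsop_general hS n lam t ht hlsop
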